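/- Let H be a connected linear r-uniform hypergraph on n vertices. Then ρ(H) ≤ (n-1)/(r-1), with equality if and only if H is a 2-(n,r,1) design. -/

import Mathlib

/-!
If the edges through a vertex `i` pairwise meet only in `i`, the shadow-graph degree of `i` is
`(r - 1) d(i) ≤ n - 1`. At a coordinate of maximal modulus of an eigenvector, the eigen-equation
gives `|λ| ≤ d(i)`, hence `ρ(H) ≤ (n - 1)/(r - 1)`.

If equality holds, the supremum is attained (eigenpairs normalised in the sup norm form a compact
set). At a maximal coordinate `w` the chain
`|λ| |x_w|^(r-1) ≤ ∑_{e ∋ w} ∏_{u ∈ e - w} |x_u| ≤ d(w) |x_w|^(r-1) ≤ (n-1)/(r-1) |x_w|^(r-1)`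
is then tight: `w` is adjacent to every vertex of the shadow and `|x|` is maximal at all its
neighbours. Connectivity spreads this to every vertex, so the shadow is complete, which for a
linear hypergraph means a `2-(n,r,1)` design. Conversely, for a design the all-ones vector is an
eigenvector with eigenvalue `(n - 1)/(r - 1)`.
-/

open Finset

/-- The `i`-th component of `A(H) x^{r-1}`, where `A(H)` is the adjacency tensor
of the uniform hypergraph `H` (for an edge all of whose vertices are distinct,
the sum over the `(r-1)!` orderings cancels the `1/(r-1)!` coefficient). -/
noncomputable def tensorApply {V : Type*} [DecidableEq V]
    (H : Finset (Finset V)) (x : V → ℂ) (i : V) : ℂ :=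
  ∑ e ∈ H.filter (fun e => i ∈ e), ∏ v ∈ e.erase i, x v

/-- `lam` is an eigenvalue of the adjacency tensor of the `r`-uniform
hypergraph `H`: `A(H) x^{r-1} = lam · x^{[r-1]}` for some nonzero `x`. -/
def IsTensorEig {V : Type*} [DecidableEq V]
    (H : Finset (Finset V)) (r : ℕ) (lam : ℂ) : Prop :=
  ∃ x : V → ℂ, x ≠ 0 ∧ ∀ i, tensorApply H x i = lam * (x i) ^ (r - 1)

/-- The spectral radius of the adjacency tensor of `H`: the supremum of the
moduli of its eigenvalues. -/
noncomputable def specRad {V : Type*} [DecidableEq V]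
    (H : Finset (Finset V)) (r : ℕ) : ℝ :=
  sSup { m : ℝ | ∃ lam : ℂ, IsTensorEig H r lam ∧ m = ‖lam‖ }

-- `lam` is an eigenvalue of the adjacency matrix of the graph `G`.
open Classical in
def IsMatEig {V : Type*} [Fintype V] (G : SimpleGraph V) (lam : ℂ) : Prop :=
  ∃ x : V → ℂ, x ≠ 0 ∧
    (Matrix.of (fun a b => if G.Adj a b then (1 : ℂ) else 0)).mulVec x = lam • x

/-- The spectral radius of the adjacency matrix of a graph `G`. -/
noncomputable def graphSpecRad {V : Type*} [Fintype V] (G : SimpleGraph V) : ℝ :=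
  sSup { m : ℝ | ∃ lam : ℂ, IsMatEig G lam ∧ m = ‖lam‖ }

/-- The shadow graph of a hypergraph. -/
def shadowGraph {V : Type*} (H : Finset (Finset V)) : SimpleGraph V where
  Adj x y := x ≠ y ∧ ∃ e ∈ H, x ∈ e ∧ y ∈ e
  symm := by
    constructor
    rintro x y ⟨hxy, e, he, hx, hy⟩
    exact ⟨hxy.symm, e, he, hy, hx⟩
  loopless := by
    constructor
    rintro x ⟨hx, -⟩
    exact hx rfl

theorem Finset.disjoint_erase_erase_of_card_inter_le_one {α : Type*} [DecidableEq α]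
    {e f : Finset α} {a : α} (hef : #(e ∩ f) ≤ 1) (hae : a ∈ e) (haf : a ∈ f) :
    Disjoint (e.erase a) (f.erase a) := by
  rw [disjoint_left]
  intro b hbe hbf
  have : 1 < #(e ∩ f) := one_lt_card.2
    ⟨b, mem_inter.2 ⟨mem_of_mem_erase hbe, mem_of_mem_erase hbf⟩, a, mem_inter.2 ⟨hae, haf⟩,
      ne_of_mem_erase hbe⟩
  omega

theorem Finset.eq_of_prod_eq_pow_card {ι R : Type*} [CommSemiring R] [LinearOrder R]
    [IsStrictOrderedRing R] {s : Finset ι} {f : ι → R} {m : R}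
    (hf0 : ∀ i ∈ s, 0 ≤ f i) (hfm : ∀ i ∈ s, f i ≤ m) (hprod : ∏ i ∈ s, f i = m ^ #s) :
    ∀ i ∈ s, f i = m := by
  classical
  intro i hi
  by_contra hne
  have hlt : f i < m := lt_of_le_of_ne (hfm i hi) hne
  have hm : 0 < m := (hf0 i hi).trans_lt hlt
  have hrest : ∏ j ∈ s.erase i, f j ≤ m ^ #(s.erase i) :=
    (prod_le_prod (fun j hj => hf0 j (mem_of_mem_erase hj))
      (fun j hj => hfm j (mem_of_mem_erase hj))).trans_eq (prod_const m)
  have : ∏ j ∈ s, f j < m ^ #s :=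
    calc ∏ j ∈ s, f j = f i * ∏ j ∈ s.erase i, f j := (mul_prod_erase s f hi).symm
      _ ≤ f i * m ^ #(s.erase i) := mul_le_mul_of_nonneg_left hrest (hf0 i hi)
      _ < m * m ^ #(s.erase i) := mul_lt_mul_of_pos_right hlt (pow_pos hm _)
      _ = m ^ #s := by rw [← pow_succ', card_erase_add_one hi]
  exact this.ne hprod

theorem SimpleGraph.Preconnected.forall_of_adj {V : Type*} {G : SimpleGraph V}
    (hG : G.Preconnected) {P : V → Prop} (hP : ∀ u v, G.Adj u v → P u → P v)
    {u : V} (hu : P u) (v : V) : P v := by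
  obtain ⟨p⟩ := hG u v
  induction p with
  | nil => exact hu
  | cons h _ ih => exact ih (hP _ _ h hu)

theorem shadowGraph_adj {V : Type*} {H : Finset (Finset V)} {x y : V} :
    (shadowGraph H).Adj x y ↔ x ≠ y ∧ ∃ e ∈ H, x ∈ e ∧ y ∈ e := Iff.rfl

section Hypergraph

variable {V : Type*} [DecidableEq V] {H : Finset (Finset V)} {r : ℕ}

def hyperDegree (H : Finset (Finset V)) (i : V) : ℕ := #(H.filter (i ∈ ·))

theorem neighborFinset_shadowGraph [Fintype V] [DecidableRel (shadowGraph H).Adj] (i : V) :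
    (shadowGraph H).neighborFinset i = (H.filter (i ∈ ·)).biUnion (·.erase i) := by
  ext j
  simp only [SimpleGraph.mem_neighborFinset, shadowGraph_adj, mem_biUnion, mem_filter, mem_erase]
  constructor
  · rintro ⟨hij, e, he, hi, hj⟩
    exact ⟨e, ⟨he, hi⟩, Ne.symm hij, hj⟩
  · rintro ⟨e, ⟨he, hi⟩, hji, hj⟩
    exact ⟨Ne.symm hji, e, he, hi, hj⟩

theorem degree_shadowGraph [Fintype V] [DecidableRel (shadowGraph H).Adj]
    (huniform : ∀ e ∈ H, #e = r) (hlinear : ∀ e ∈ H, ∀ f ∈ H, e ≠ f → #(e ∩ f) ≤ 1)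
    (i : V) : (shadowGraph H).degree i = hyperDegree H i * (r - 1) := by
  rw [← SimpleGraph.card_neighborFinset_eq_degree, neighborFinset_shadowGraph, card_biUnion]
  · rw [sum_congr rfl fun e he => by
      rw [card_erase_of_mem (mem_filter.1 he).2, huniform e (mem_filter.1 he).1],
      sum_const, smul_eq_mul, hyperDegree]
  · intro e he f hf hef
    rw [mem_coe, mem_filter] at he hf
    exact disjoint_erase_erase_of_card_inter_le_one (hlinear e he.1 f hf.1 hef) he.2 hf.2

theorem hyperDegree_mul_eq_degree_shadowGraph [Fintype V] [DecidableRel (shadowGraph H).Adj]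
    (hr : 1 ≤ r) (huniform : ∀ e ∈ H, #e = r) (hlinear : ∀ e ∈ H, ∀ f ∈ H, e ≠ f → #(e ∩ f) ≤ 1)
    (i : V) : (hyperDegree H i : ℝ) * ((r : ℝ) - 1) = (shadowGraph H).degree i := by
  rw [degree_shadowGraph huniform hlinear, Nat.cast_mul, Nat.cast_sub hr, Nat.cast_one]

theorem hyperDegree_le [Fintype V] (hr : 2 ≤ r)
    (huniform : ∀ e ∈ H, #e = r) (hlinear : ∀ e ∈ H, ∀ f ∈ H, e ≠ f → #(e ∩ f) ≤ 1)
    (i : V) : (hyperDegree H i : ℝ) ≤ ((Fintype.card V : ℝ) - 1) / ((r : ℝ) - 1) := by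
  classical
  have hr1 : (0 : ℝ) < (r : ℝ) - 1 := by
    have : (2 : ℝ) ≤ r := by exact_mod_cast hr
    linarith
  have hdeg : ((shadowGraph H).degree i : ℝ) + 1 ≤ Fintype.card V := by
    exact_mod_cast (shadowGraph H).degree_lt_card_verts i
  rw [le_div_iff₀ hr1, hyperDegree_mul_eq_degree_shadowGraph (by omega) huniform hlinear]
  linarith

theorem hyperDegree_eq_iff_isUniversal [Fintype V] (hr : 2 ≤ r)
    (huniform : ∀ e ∈ H, #e = r) (hlinear : ∀ e ∈ H, ∀ f ∈ H, e ≠ f → #(e ∩ f) ≤ 1)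
    (i : V) : (hyperDegree H i : ℝ) = ((Fintype.card V : ℝ) - 1) / ((r : ℝ) - 1) ↔
      (shadowGraph H).IsUniversal i := by
  classical
  have hr1 : (r : ℝ) - 1 ≠ 0 := by
    have : (2 : ℝ) ≤ r := by exact_mod_cast hr
    linarith
  have hcard : 1 ≤ Fintype.card V := Fintype.card_pos_iff.2 ⟨i⟩
  rw [eq_div_iff hr1, hyperDegree_mul_eq_degree_shadowGraph (by omega) huniform hlinear,
    ← SimpleGraph.degree_eq_card_sub_one, ← Nat.cast_one, ← Nat.cast_sub hcard, Nat.cast_inj]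

theorem shadowGraph_eq_top_iff (hlinear : ∀ e ∈ H, ∀ f ∈ H, e ≠ f → #(e ∩ f) ≤ 1) :
    shadowGraph H = ⊤ ↔ ∀ x y : V, x ≠ y → ∃! e, e ∈ H ∧ x ∈ e ∧ y ∈ e := by
  rw [SimpleGraph.eq_top_iff_forall_ne_adj]
  refine forall₂_congr fun x y => imp_congr_right fun hxy => ?_
  refine ⟨fun ⟨_, e, he, hx, hy⟩ => ⟨e, ⟨he, hx, hy⟩, ?_⟩, fun ⟨e, ⟨he, hx, hy⟩, _⟩ =>
    ⟨hxy, e, he, hx, hy⟩⟩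
  rintro f ⟨hf, hxf, hyf⟩
  by_contra hfe
  have : 1 < #(f ∩ e) := one_lt_card.2
    ⟨x, mem_inter.2 ⟨hxf, hx⟩, y, mem_inter.2 ⟨hyf, hy⟩, hxy⟩
  have := hlinear f hf e he hfe
  omega

end Hypergraph

section Tensor

variable {V : Type*} [DecidableEq V] {H : Finset (Finset V)} {r : ℕ}

theorem tensorApply_smul (huniform : ∀ e ∈ H, #e = r) (c : ℂ) (x : V → ℂ) (i : V) :
    tensorApply H (c • x) i = c ^ (r - 1) * tensorApply H x i := by
  rw [tensorApply, tensorApply, mul_sum]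
  refine sum_congr rfl fun e he => ?_
  rw [mem_filter] at he
  simp only [Pi.smul_apply, smul_eq_mul, prod_mul_distrib, prod_const,
    card_erase_of_mem he.2, huniform e he.1]

theorem tensorApply_one (i : V) : tensorApply H 1 i = hyperDegree H i := by
  simp [tensorApply, hyperDegree]

theorem continuous_tensorApply (i : V) : Continuous fun x : V → ℂ => tensorApply H x i :=
  continuous_finsetSum _ fun _ _ => continuous_finsetProd _ fun v _ => continuous_apply v

theorem norm_tensorApply_le (x : V → ℂ) (i : V) :
    ‖tensorApply H x i‖ ≤ ∑ e ∈ H.filter (i ∈ ·), ∏ u ∈ e.erase i, ‖x u‖ :=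
  (norm_sum_le _ _).trans_eq (sum_congr rfl fun _ _ => norm_prod _ _)

theorem prod_norm_le_pow (huniform : ∀ e ∈ H, #e = r) {x : V → ℂ} {m : ℝ}
    (hm : ∀ j, ‖x j‖ ≤ m) {i : V} {e : Finset V} (he : e ∈ H.filter (i ∈ ·)) :
    ∏ u ∈ e.erase i, ‖x u‖ ≤ m ^ (r - 1) := by
  rw [mem_filter] at he
  calc ∏ u ∈ e.erase i, ‖x u‖ ≤ m ^ #(e.erase i) :=
        (prod_le_prod (fun _ _ => norm_nonneg _) fun u _ => hm u).trans_eq (prod_const m)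
    _ = m ^ (r - 1) := by rw [card_erase_of_mem he.2, huniform e he.1]

theorem sum_prod_norm_le (huniform : ∀ e ∈ H, #e = r) {x : V → ℂ} {m : ℝ}
    (hm : ∀ j, ‖x j‖ ≤ m) (i : V) :
    ∑ e ∈ H.filter (i ∈ ·), ∏ u ∈ e.erase i, ‖x u‖ ≤ hyperDegree H i * m ^ (r - 1) :=
  (sum_le_card_nsmul _ _ _ fun _ he => prod_norm_le_pow huniform hm he).trans_eq
    (nsmul_eq_mul _ _)

theorem IsTensorEig.exists_norm_le_hyperDegree [Fintype V] (huniform : ∀ e ∈ H, #e = r)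
    {lam : ℂ} (hlam : IsTensorEig H r lam) : ∃ i, ‖lam‖ ≤ hyperDegree H i := by
  obtain ⟨x, hx0, hx⟩ := hlam
  obtain ⟨j, hj⟩ := Function.ne_iff.1 hx0
  obtain ⟨v, -, hv⟩ := exists_max_image univ (fun i => ‖x i‖) ⟨j, mem_univ j⟩
  have hmax : ∀ i, ‖x i‖ ≤ ‖x v‖ := fun i => hv i (mem_univ i)
  have hpos : 0 < ‖x v‖ ^ (r - 1) := pow_pos ((norm_pos_iff.2 hj).trans_le (hmax j)) _
  refine ⟨v, le_of_mul_le_mul_right ?_ hpos⟩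
  calc ‖lam‖ * ‖x v‖ ^ (r - 1) = ‖tensorApply H x v‖ := by rw [hx v, norm_mul, norm_pow]
    _ ≤ _ := norm_tensorApply_le x v
    _ ≤ _ := sum_prod_norm_le huniform hmax v

end Tensor

section SpectralRadius

variable {V : Type*} [Fintype V] [DecidableEq V] {H : Finset (Finset V)} {r : ℕ}

theorem IsTensorEig.norm_le_card (huniform : ∀ e ∈ H, #e = r) {lam : ℂ}
    (hlam : IsTensorEig H r lam) : ‖lam‖ ≤ #H := by
  obtain ⟨i, hi⟩ := hlam.exists_norm_le_hyperDegree huniform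
  exact hi.trans (by exact_mod_cast card_filter_le H _)

theorem isCompact_setOf_norm_tensorEig (huniform : ∀ e ∈ H, #e = r) :
    IsCompact {m : ℝ | ∃ lam : ℂ, IsTensorEig H r lam ∧ m = ‖lam‖} := by
  set K : Set (ℂ × (V → ℂ)) :=
    (⋂ i, {p | tensorApply H p.2 i = p.1 * p.2 i ^ (r - 1)}) ∩ {p | ‖p.2‖ = 1}
  have hK_eig : ∀ p ∈ K, IsTensorEig H r p.1 := fun p hp =>
    ⟨p.2, fun h0 => by simpa [h0] using hp.2, Set.mem_iInter.1 hp.1⟩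
  have hK_closed : IsClosed K :=
    (isClosed_iInter fun i => isClosed_eq ((continuous_tensorApply i).comp continuous_snd)
      (continuous_fst.mul (((continuous_apply i).comp continuous_snd).pow _))).inter
      (isClosed_eq continuous_snd.norm continuous_const)
  have hK_bdd : K ⊆ Metric.closedBall 0 (#H + 1) := by
    intro p hp
    have := (hK_eig p hp).norm_le_card huniform
    rw [Metric.mem_closedBall, dist_zero_right, Prod.norm_def, hp.2]
    exact sup_le (by linarith) (by linarith [(norm_nonneg p.1).trans this])
  have hK_image : (fun p : ℂ × (V → ℂ) => ‖p.1‖) '' K =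
      {m : ℝ | ∃ lam : ℂ, IsTensorEig H r lam ∧ m = ‖lam‖} := by
    ext m
    constructor
    · rintro ⟨p, hp, rfl⟩
      exact ⟨p.1, hK_eig p hp, rfl⟩
    · rintro ⟨lam, ⟨x, hx0, hx⟩, rfl⟩
      have hxn : ‖x‖ ≠ 0 := norm_ne_zero_iff.2 hx0
      refine ⟨(lam, ((‖x‖⁻¹ : ℝ) : ℂ) • x), ⟨Set.mem_iInter.2 fun i => ?_, ?_⟩, rfl⟩
      · simp only [Set.mem_ofPred_eq, tensorApply_smul huniform, hx i, Pi.smul_apply, smul_eq_mul, mul_pow]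
        ring
      · rw [Set.mem_ofPred_eq, norm_smul, Complex.norm_real, norm_inv, norm_norm, inv_mul_cancel₀ hxn]
  rw [← hK_image]
  exact (Metric.isCompact_of_isClosed_isBounded hK_closed
    (Metric.isBounded_closedBall.subset hK_bdd)).image (continuous_norm.comp continuous_fst)

theorem exists_norm_eq_specRad (huniform : ∀ e ∈ H, #e = r) (hpos : 0 < specRad H r) :
    ∃ lam : ℂ, IsTensorEig H r lam ∧ ‖lam‖ = specRad H r := by
  have hne : {m : ℝ | ∃ lam : ℂ, IsTensorEig H r lam ∧ m = ‖lam‖}.Nonempty := by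
    by_contra h
    rw [Set.not_nonempty_iff_eq_empty] at h
    rw [specRad, h, Real.sSup_empty] at hpos
    exact hpos.false
  obtain ⟨lam, hlam, h⟩ := (isCompact_setOf_norm_tensorEig huniform).sSup_mem hne
  exact ⟨lam, hlam, h.symm⟩

end SpectralRadius

section Extremal

variable {V : Type*} [Fintype V] [DecidableEq V] {H : Finset (Finset V)} {r : ℕ}

theorem IsTensorEig.norm_le (hr : 2 ≤ r) (huniform : ∀ e ∈ H, #e = r)
    (hlinear : ∀ e ∈ H, ∀ f ∈ H, e ≠ f → #(e ∩ f) ≤ 1) {lam : ℂ} (hlam : IsTensorEig H r lam) :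
    ‖lam‖ ≤ ((Fintype.card V : ℝ) - 1) / ((r : ℝ) - 1) := by
  obtain ⟨i, hi⟩ := hlam.exists_norm_le_hyperDegree huniform
  exact hi.trans (hyperDegree_le hr huniform hlinear i)

theorem specRad_le [Nonempty V] (hr : 2 ≤ r) (huniform : ∀ e ∈ H, #e = r)
    (hlinear : ∀ e ∈ H, ∀ f ∈ H, e ≠ f → #(e ∩ f) ≤ 1) :
    specRad H r ≤ ((Fintype.card V : ℝ) - 1) / ((r : ℝ) - 1) :=
  Real.sSup_le (fun _ ⟨_, hlam, hm⟩ => hm ▸ hlam.norm_le hr huniform hlinear)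
    ((Nat.cast_nonneg _).trans (hyperDegree_le hr huniform hlinear (Classical.arbitrary V)))

theorem isUniversal_and_norm_eq_of_norm_eq (hr : 2 ≤ r) (huniform : ∀ e ∈ H, #e = r)
    (hlinear : ∀ e ∈ H, ∀ f ∈ H, e ≠ f → #(e ∩ f) ≤ 1) {lam : ℂ} {x : V → ℂ}
    (hx : ∀ i, tensorApply H x i = lam * x i ^ (r - 1))
    (hlam : ‖lam‖ = ((Fintype.card V : ℝ) - 1) / ((r : ℝ) - 1))
    {m : ℝ} (hm : 0 < m) (hmax : ∀ j, ‖x j‖ ≤ m) {w : V} (hw : ‖x w‖ = m) :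
    (shadowGraph H).IsUniversal w ∧ ∀ u, (shadowGraph H).Adj w u → ‖x u‖ = m := by
  set B := ((Fintype.card V : ℝ) - 1) / ((r : ℝ) - 1)
  have hpos : 0 < m ^ (r - 1) := pow_pos hm _
  have hdeg_le : (hyperDegree H w : ℝ) ≤ B := hyperDegree_le hr huniform hlinear w
  have hlow : B * m ^ (r - 1) ≤ ∑ e ∈ H.filter (w ∈ ·), ∏ u ∈ e.erase w, ‖x u‖ := by
    rw [← hlam, ← hw, ← norm_pow, ← norm_mul, ← hx w]
    exact norm_tensorApply_le x w
  have hup := sum_prod_norm_le huniform hmax w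
  have hdeg : (hyperDegree H w : ℝ) = B :=
    le_antisymm hdeg_le (le_of_mul_le_mul_right (hlow.trans hup) hpos)
  have hprod : ∀ e ∈ H.filter (w ∈ ·), ∏ u ∈ e.erase w, ‖x u‖ = m ^ (r - 1) := by
    refine (sum_eq_sum_iff_of_le fun e he => prod_norm_le_pow huniform hmax he).1 ?_
    refine le_antisymm (sum_le_sum fun e he => prod_norm_le_pow huniform hmax he) ?_
    rw [sum_const, nsmul_eq_mul]
    exact (mul_le_mul_of_nonneg_right hdeg.le hpos.le).trans hlow
  refine ⟨(hyperDegree_eq_iff_isUniversal hr huniform hlinear w).1 hdeg, ?_⟩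
  rintro u ⟨hwu, e, he, hwe, hue⟩
  have hew : e ∈ H.filter (w ∈ ·) := mem_filter.2 ⟨he, hwe⟩
  refine eq_of_prod_eq_pow_card (fun _ _ => norm_nonneg _) (fun j _ => hmax j) ?_ u
    (mem_erase.2 ⟨Ne.symm hwu, hue⟩)
  rw [hprod e hew, card_erase_of_mem hwe, huniform e he]

theorem shadowGraph_eq_top_of_norm_eq (hr : 2 ≤ r) (huniform : ∀ e ∈ H, #e = r)
    (hlinear : ∀ e ∈ H, ∀ f ∈ H, e ≠ f → #(e ∩ f) ≤ 1) (hconn : (shadowGraph H).Preconnected)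
    {lam : ℂ} (heig : IsTensorEig H r lam)
    (hlam : ‖lam‖ = ((Fintype.card V : ℝ) - 1) / ((r : ℝ) - 1)) :
    shadowGraph H = ⊤ := by
  obtain ⟨x, hx0, hx⟩ := heig
  obtain ⟨j, hj⟩ := Function.ne_iff.1 hx0
  obtain ⟨v, -, hv⟩ := exists_max_image univ (fun i => ‖x i‖) ⟨j, mem_univ j⟩
  have hmax : ∀ i, ‖x i‖ ≤ ‖x v‖ := fun i => hv i (mem_univ i)
  have hm : 0 < ‖x v‖ := (norm_pos_iff.2 hj).trans_le (hmax j)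
  have hall : ∀ w, ‖x w‖ = ‖x v‖ := hconn.forall_of_adj
    (fun _ _ hadj hw => (isUniversal_and_norm_eq_of_norm_eq hr huniform hlinear hx hlam hm hmax
      hw).2 _ hadj) rfl
  exact SimpleGraph.eq_top_iff_forall_isUniversal.2 fun w =>
    (isUniversal_and_norm_eq_of_norm_eq hr huniform hlinear hx hlam hm hmax (hall w)).1

theorem exists_isTensorEig_norm_eq_of_shadowGraph_eq_top [Nonempty V] (hr : 2 ≤ r)
    (huniform : ∀ e ∈ H, #e = r) (hlinear : ∀ e ∈ H, ∀ f ∈ H, e ≠ f → #(e ∩ f) ≤ 1)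
    (htop : shadowGraph H = ⊤) :
    ∃ lam : ℂ, IsTensorEig H r lam ∧ ‖lam‖ = ((Fintype.card V : ℝ) - 1) / ((r : ℝ) - 1) := by
  have hdeg (i : V) := (hyperDegree_eq_iff_isUniversal hr huniform hlinear i).2
    (htop ▸ SimpleGraph.IsUniversal.top)
  obtain ⟨v⟩ := ‹Nonempty V›
  refine ⟨hyperDegree H v, ⟨1, one_ne_zero, fun i => ?_⟩, by rw [Complex.norm_natCast, hdeg]⟩
  rw [tensorApply_one, Pi.one_apply, one_pow, mul_one, Nat.cast_inj, ← Nat.cast_inj (R := ℝ),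
    hdeg, hdeg]

end Extremal

/-- For a connected linear `r`-uniform hypergraph on `n` vertices,
`ρ(H) ≤ (n-1)/(r-1)`, with equality iff `H` is a `2-(n,r,1)` design. -/
theorem stmt_12 {V : Type*} [Fintype V] [DecidableEq V] (r : ℕ) (hr : 2 ≤ r)
    (H : Finset (Finset V))
    (huniform : ∀ e ∈ H, e.card = r)
    (hlinear : ∀ e ∈ H, ∀ f ∈ H, e ≠ f → (e ∩ f).card ≤ 1)
    (hconn : (shadowGraph H).Connected) :
    specRad H r ≤ ((Fintype.card V : ℝ) - 1) / ((r : ℝ) - 1) ∧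
    (specRad H r = ((Fintype.card V : ℝ) - 1) / ((r : ℝ) - 1) ↔
      ∀ x y : V, x ≠ y → ∃! e, e ∈ H ∧ x ∈ e ∧ y ∈ e) := by
  have : Nonempty V := hconn.nonempty
  have hle := specRad_le hr huniform hlinear
  refine ⟨hle, ?_⟩
  rw [← shadowGraph_eq_top_iff hlinear]
  constructor
  · intro heq
    rcases subsingleton_or_nontrivial V with hV | hV
    · exact SimpleGraph.eq_top_iff_forall_ne_adj.2 fun a b hab => (hab (Subsingleton.elim a b)).elim
    have hpos : 0 < specRad H r := by
      have hn : (1 : ℝ) < Fintype.card V := by exact_mod_cast Fintype.one_lt_card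
      have hr1 : (1 : ℝ) < r := by exact_mod_cast hr
      rw [heq]
      exact div_pos (by linarith) (by linarith)
    obtain ⟨lam, hlam, hnorm⟩ := exists_norm_eq_specRad huniform hpos
    exact shadowGraph_eq_top_of_norm_eq hr huniform hlinear hconn.preconnected hlam
      (hnorm.trans heq)
  · intro htop
    obtain ⟨lam, hlam, hnorm⟩ :=
      exists_isTensorEig_norm_eq_of_shadowGraph_eq_top hr huniform hlinear htop
    exact IsGreatest.csSup_eq ⟨⟨lam, hlam, hnorm.symm⟩,
      fun _ ⟨_, hlam', hm⟩ => hm ▸ hlam'.norm_le hr huniform hlinear⟩
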